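/- Let c < d < 1 and φ continuous on [c,d]. Then the function t ↦ ∫_c^d (φ(γ)/Γ(2-γ)) t^{1-γ} dγ is absolutely continuous on [0,a], with derivative t ↦ ∫_c^d (φ(γ)(1-γ)/Γ(2-γ)) t^{-γ} dγ which is locally integrable on [0,a]. -/

import Mathlib

/-!
For `γ ∈ [c, d]` with `d < 1` the kernel `x ^ (-γ)` is dominated on `(0, a]` by the integrable
function `x ^ (-c) + x ^ (-d)`, so Fubini applies to `(x, γ) ↦ G γ * x ^ (-γ)` on
`(0, a] × (c, d]` for any weight `G` continuous on `[c, d]`. Since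
`∫₀ᵗ x ^ (-γ) dx = t ^ (1 - γ) / (1 - γ)`, the weight `∫_c^d (φ γ / Γ(2 - γ)) t ^ (1 - γ) dγ`
is the indefinite integral of the integrable function `∫_c^d (φ γ (1 - γ) / Γ(2 - γ)) t ^ (-γ) dγ`,
and indefinite integrals are absolutely continuous.
-/

open MeasureTheory Set

/-- Absolute continuity of a function on `[A,B]` in the standard ε–δ sense. -/
def AbsolutelyContinuousOnI (f : ℝ → ℝ) (A B : ℝ) : Prop :=
  ∀ ε > (0:ℝ), ∃ δ > (0:ℝ), ∀ (n : ℕ) (s t : Fin n → ℝ),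
    (∀ i, A ≤ s i ∧ s i ≤ t i ∧ t i ≤ B) →
    (∀ i j, i ≠ j → Disjoint (Set.Ioo (s i) (t i)) (Set.Ioo (s j) (t j))) →
    (∑ i, (t i - s i)) < δ → (∑ i, |f (t i) - f (s i)|) < ε

theorem Set.disjoint_Ioc_of_disjoint_Ioo {α : Type*} [LinearOrder α] [DenselyOrdered α]
    {a₁ a₂ b₁ b₂ : α} (h : Disjoint (Ioo a₁ a₂) (Ioo b₁ b₂)) : Disjoint (Ioc a₁ a₂) (Ioc b₁ b₂) :=
  Ioc_disjoint_Ioc.2 (Ioo_disjoint_Ioo.1 h)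

theorem AbsolutelyContinuousOnInterval.absolutelyContinuousOnI {f : ℝ → ℝ} {A B : ℝ}
    (hf : AbsolutelyContinuousOnInterval f A B) : AbsolutelyContinuousOnI f A B := by
  intro ε hε
  obtain ⟨δ, hδ, hfδ⟩ := (absolutelyContinuousOnInterval_iff f A B).1 hf ε hε
  refine ⟨δ, hδ, fun n s t hst hdisj hsum => ?_⟩
  -- Mathlib indexes the intervals by `ℕ` (only `i < n` is looked at) and uses `uIoc`.
  let I : ℕ → ℝ × ℝ := fun i => if h : i < n then (s ⟨i, h⟩, t ⟨i, h⟩) else 0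
  have hI (i : ℕ) (hi : i < n) : I i = (s ⟨i, hi⟩, t ⟨i, hi⟩) := dif_pos hi
  have hmem : (n, I) ∈ AbsolutelyContinuousOnInterval.disjWithin A B := by
    refine ⟨fun i hi => ?_, fun i hi j hj hij => ?_⟩
    · dsimp only at hi ⊢
      rw [Finset.mem_range] at hi
      obtain ⟨hs, hst, ht⟩ := hst ⟨i, hi⟩
      rw [hI i hi]
      exact ⟨Icc_subset_uIcc ⟨hs, hst.trans ht⟩, Icc_subset_uIcc ⟨hs.trans hst, ht⟩⟩
    · rw [Finset.coe_range, mem_Iio] at hi hj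
      have key := hdisj ⟨i, hi⟩ ⟨j, hj⟩ (by simpa using hij)
      simp only [Function.onFun, hI i hi, hI j hj]
      rw [uIoc_of_le (hst _).2.1, uIoc_of_le (hst _).2.1]
      exact disjoint_Ioc_of_disjoint_Ioo key
  have hdist (g : ℝ → ℝ) : ∑ i ∈ Finset.range n, dist (g (I i).1) (g (I i).2) =
      ∑ i, |g (t i) - g (s i)| := by
    rw [Finset.sum_range (fun i => dist (g (I i).1) (g (I i).2))]
    simp only [fun i : Fin n => hI i i.isLt, Real.dist_eq, abs_sub_comm]
  rw [← hdist f]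
  refine hfδ (n, I) hmem ?_
  have hlen := hdist id
  simp only [id, abs_of_nonneg (sub_nonneg.2 (hst _).2.1)] at hlen
  exact hlen ▸ hsum

theorem AbsolutelyContinuousOnI.congr {f g : ℝ → ℝ} {A B : ℝ} (hg : AbsolutelyContinuousOnI g A B)
    (hfg : EqOn f g (Icc A B)) : AbsolutelyContinuousOnI f A B := by
  intro ε hε
  obtain ⟨δ, hδ, hgδ⟩ := hg ε hε
  refine ⟨δ, hδ, fun n s t hst hdisj hsum => ?_⟩
  have hs (i : Fin n) : f (s i) = g (s i) := hfg ⟨(hst i).1, (hst i).2.1.trans (hst i).2.2⟩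
  have ht (i : Fin n) : f (t i) = g (t i) := hfg ⟨(hst i).1.trans (hst i).2.1, (hst i).2.2⟩
  simpa only [hs, ht] using hgδ n s t hst hdisj hsum

theorem Real.integral_rpow_neg_of_lt_one {γ : ℝ} (hγ : γ < 1) (t : ℝ) :
    ∫ x in (0 : ℝ)..t, x ^ (-γ) = t ^ (1 - γ) / (1 - γ) := by
  rw [integral_rpow (Or.inl (by linarith)), neg_add_eq_sub,
    Real.zero_rpow (sub_ne_zero.2 hγ.ne'), sub_zero]

theorem Real.rpow_neg_le_rpow_neg_add_rpow_neg {x c d γ : ℝ} (hx : 0 < x) (hγ : γ ∈ Icc c d) :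
    x ^ (-γ) ≤ x ^ (-c) + x ^ (-d) := by
  rcases le_total x 1 with hx1 | hx1
  · linarith [Real.rpow_le_rpow_of_exponent_ge hx hx1 (neg_le_neg hγ.2),
      Real.rpow_nonneg hx.le (-c)]
  · linarith [Real.rpow_le_rpow_of_exponent_le hx1 (neg_le_neg hγ.1),
      Real.rpow_nonneg hx.le (-d)]

section WeightedRpow

variable {G : ℝ → ℝ} {c d : ℝ}

theorem integrable_prod_mul_rpow_neg (hG : ContinuousOn G (Icc c d)) (hcd : c ≤ d) (hd : d < 1)
    (a : ℝ) :
    Integrable (fun p : ℝ × ℝ => G p.2 * p.1 ^ (-p.2))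
      ((volume.restrict (Ioc 0 a)).prod (volume.restrict (Ioc c d))) := by
  obtain ⟨M, hM⟩ := isCompact_Icc.exists_bound_of_continuousOn hG
  have hrpow {r : ℝ} (hr : r < 1) : IntegrableOn (fun x : ℝ => x ^ (-r)) (Ioc 0 a) :=
    (intervalIntegral.intervalIntegrable_rpow' (by linarith)).1
  have hdom : Integrable (fun p : ℝ × ℝ => (p.1 ^ (-c) + p.1 ^ (-d)) * M)
      ((volume.restrict (Ioc 0 a)).prod (volume.restrict (Ioc c d))) :=
    ((hrpow (hcd.trans_lt hd)).add (hrpow hd)).mul_prod (integrable_const M)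
  have hcont : ContinuousOn (fun p : ℝ × ℝ => G p.2 * p.1 ^ (-p.2)) (Ioi 0 ×ˢ Icc c d) :=
    (hG.comp continuousOn_snd fun p hp => hp.2).mul
      (continuousOn_fst.rpow continuousOn_snd.neg fun p hp => Or.inl hp.1.ne')
  rw [Measure.prod_restrict, ← Measure.volume_eq_prod] at hdom ⊢
  refine hdom.mono' ((hcont.mono (prod_mono Ioc_subset_Ioi_self Ioc_subset_Icc_self))
    |>.aestronglyMeasurable (measurableSet_Ioc.prod measurableSet_Ioc)) ?_
  filter_upwards [ae_restrict_mem (measurableSet_Ioc.prod measurableSet_Ioc)] with p ⟨hx, hγ⟩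
  have hγ' : p.2 ∈ Icc c d := Ioc_subset_Icc_self hγ
  rw [norm_mul, Real.norm_of_nonneg (Real.rpow_nonneg hx.1.le _), mul_comm]
  exact mul_le_mul (Real.rpow_neg_le_rpow_neg_add_rpow_neg hx.1 hγ') (hM _ hγ') (norm_nonneg _)
    (add_nonneg (Real.rpow_nonneg hx.1.le _) (Real.rpow_nonneg hx.1.le _))

theorem intervalIntegrable_integral_mul_rpow_neg (hG : ContinuousOn G (Icc c d)) (hcd : c ≤ d)
    (hd : d < 1) {a : ℝ} (ha : 0 ≤ a) :
    IntervalIntegrable (fun x => ∫ γ in c..d, G γ * x ^ (-γ)) volume 0 a := by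
  rw [intervalIntegrable_iff_integrableOn_Ioc_of_le ha]
  simp only [intervalIntegral.integral_of_le hcd]
  exact (integrable_prod_mul_rpow_neg hG hcd hd a).integral_prod_left

theorem integral_integral_mul_rpow_neg (hG : ContinuousOn G (Icc c d)) (hcd : c ≤ d) (hd : d < 1)
    {t : ℝ} (ht : 0 ≤ t) :
    ∫ x in (0 : ℝ)..t, ∫ γ in c..d, G γ * x ^ (-γ) =
      ∫ γ in c..d, G γ * (t ^ (1 - γ) / (1 - γ)) := by
  have hswap := integral_integral_swap (f := fun x γ => G γ * x ^ (-γ))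
    (integrable_prod_mul_rpow_neg hG hcd hd t)
  simp only [intervalIntegral.integral_of_le hcd, intervalIntegral.integral_of_le ht] at hswap ⊢
  rw [hswap]
  refine setIntegral_congr_fun measurableSet_Ioc fun γ hγ => ?_
  rw [integral_const_mul, ← intervalIntegral.integral_of_le ht,
    Real.integral_rpow_neg_of_lt_one (hγ.2.trans_lt hd)]

end WeightedRpow

theorem Real.continuousOn_Gamma_Ioi : ContinuousOn Real.Gamma (Ioi 0) := fun _ hs =>
  (Real.differentiableAt_Gamma fun m =>
    ((neg_nonpos.2 m.cast_nonneg).trans_lt hs).ne').continuousAt.continuousWithinAt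

/-- for `c < d < 1` and `φ` continuous on `[c,d]`, the function
`A(t) = ∫_c^d (φ(γ)/Γ(2-γ)) t^{1-γ} dγ` is absolutely continuous on `[0,a]`,
with derivative `B(t) = ∫_c^d (φ(γ)(1-γ)/Γ(2-γ)) t^{-γ} dγ` locally
integrable on `[0,a]`. -/
theorem weight_absolutely_continuous
    (a c d : ℝ) (ha : 0 < a) (hcd : c < d) (hd : d < 1)
    (φ : ℝ → ℝ) (hφ : ContinuousOn φ (Set.Icc c d)) :
    IntegrableOn
      (fun t : ℝ => ∫ γ in c..d, (φ γ * (1 - γ) / Real.Gamma (2 - γ)) * t ^ (-γ))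
      (Set.Icc 0 a) volume ∧
    AbsolutelyContinuousOnI
      (fun t : ℝ => ∫ γ in c..d, (φ γ / Real.Gamma (2 - γ)) * t ^ (1 - γ)) 0 a ∧
    (∀ t ∈ Set.Icc (0:ℝ) a,
      (∫ γ in c..d, (φ γ / Real.Gamma (2 - γ)) * t ^ (1 - γ)) =
        (∫ γ in c..d, (φ γ / Real.Gamma (2 - γ)) * (0:ℝ) ^ (1 - γ)) +
          ∫ x in (0:ℝ)..t,
            ∫ γ in c..d, (φ γ * (1 - γ) / Real.Gamma (2 - γ)) * x ^ (-γ)) := by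
  have hγ1 : ∀ γ ∈ uIcc c d, γ < 1 := fun γ hγ => by
    rw [uIcc_of_le hcd.le] at hγ
    exact hγ.2.trans_lt hd
  have hGamma : MapsTo (fun γ => 2 - γ) (Icc c d) (Ioi 0) := fun γ hγ => by
    simp only [mem_Ioi]
    linarith [hγ.2]
  have hG : ContinuousOn (fun γ => φ γ * (1 - γ) / Real.Gamma (2 - γ)) (Icc c d) :=
    (hφ.mul (continuousOn_const.sub continuousOn_id)).div
      (Real.continuousOn_Gamma_Ioi.comp (continuousOn_const.sub continuousOn_id) hGamma)
      fun γ hγ => (Real.Gamma_pos_of_pos (hGamma hγ)).ne'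
  have hB := intervalIntegrable_integral_mul_rpow_neg hG hcd.le hd ha.le
  have hA0 : ∫ γ in c..d, (φ γ / Real.Gamma (2 - γ)) * (0:ℝ) ^ (1 - γ) = 0 := by
    rw [intervalIntegral.integral_congr (g := 0) fun γ hγ => by
      simp [Real.zero_rpow (sub_ne_zero.2 (hγ1 γ hγ).ne')]]
    exact intervalIntegral.integral_zero
  have hAB : EqOn (fun t => ∫ γ in c..d, (φ γ / Real.Gamma (2 - γ)) * t ^ (1 - γ))
      (fun t => ∫ x in (0:ℝ)..t, ∫ γ in c..d, (φ γ * (1 - γ) / Real.Gamma (2 - γ)) * x ^ (-γ))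
      (Icc 0 a) := fun t ht => by
    dsimp only
    rw [integral_integral_mul_rpow_neg hG hcd.le hd ht.1]
    refine intervalIntegral.integral_congr fun γ hγ => ?_
    field_simp [sub_ne_zero.2 (hγ1 γ hγ).ne']
  refine ⟨(integrableOn_Icc_iff_integrableOn_Ioc).2 hB.1,
    (hB.absolutelyContinuousOnInterval_intervalIntegral left_mem_uIcc).absolutelyContinuousOnI.congr
      hAB, fun t ht => ?_⟩
  rw [hA0, zero_add]
  exact hAB ht
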